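/- Let X_H = p_r ∂/∂r + (2L/r³) ∂/∂p_r + (1/r²) X_L and U = p_r + (μ/r) X_L. Then the double commutator [[X_H, U], U] = 0. -/

import Mathlib

open Real

/- Phase space coordinates: `x 0 = r`, `x 1 = ψ`, `x 2 = p_r`, `x 3 = p_ψ`. -/

/-- Partial derivative with respect to the `i`-th coordinate. -/
noncomputable def pd (i : Fin 4) (f : (Fin 4 → ℝ) → ℝ) (x : Fin 4 → ℝ) : ℝ :=
  deriv (fun t => f (Function.update x i t)) (x i)

/-- The angular Hamiltonian `L = ½ p_ψ² + F(ψ)`. -/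
noncomputable def Lfun (F : ℝ → ℝ) (x : Fin 4 → ℝ) : ℝ :=
  (1/2) * (x 3)^2 + F (x 1)

/-- The Hamiltonian vector field `X_L = p_ψ ∂/∂ψ − F'(ψ) ∂/∂p_ψ` as an operator. -/
noncomputable def XL (F : ℝ → ℝ) (f : (Fin 4 → ℝ) → ℝ) (x : Fin 4 → ℝ) : ℝ :=
  x 3 * pd 1 f x - deriv F (x 1) * pd 3 f x

/-- The Hamiltonian `H = ½ p_r² + (½ p_ψ² + F(ψ))/r²`. -/
noncomputable def Hfun (F : ℝ → ℝ) (x : Fin 4 → ℝ) : ℝ :=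
  (1/2) * (x 2)^2 + (1 / (x 0)^2) * ((1/2) * (x 3)^2 + F (x 1))

/-- The operator `U = p_r + (μ/r) X_L` (multiplication by `p_r` plus `(μ/r)·X_L`). -/
noncomputable def Uop (μ : ℝ) (F : ℝ → ℝ) (f : (Fin 4 → ℝ) → ℝ) (x : Fin 4 → ℝ) : ℝ :=
  x 2 * f x + (μ / x 0) * XL F f x

/-- The operator `X_H = p_r ∂/∂r + (2L/r³) ∂/∂p_r + (1/r²) X_L`. -/
noncomputable def XHop (F : ℝ → ℝ) (f : (Fin 4 → ℝ) → ℝ) (x : Fin 4 → ℝ) : ℝ :=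
  x 2 * pd 0 f x + (2 * Lfun F x / (x 0)^3) * pd 2 f x + (1 / (x 0)^2) * XL F f x

namespace DC

variable {μ : ℝ} {F : ℝ → ℝ} {g h : (Fin 4 → ℝ) → ℝ} {x : Fin 4 → ℝ} {i j : Fin 4} {φ : ℝ → ℝ}

def S : Set (Fin 4 → ℝ) := {x | x 0 ≠ 0}

lemma isOpen_S : IsOpen S := isOpen_ne.preimage (continuous_apply 0)

abbrev Sm (g : (Fin 4 → ℝ) → ℝ) : Prop := ContDiffOn ℝ (⊤ : ℕ∞) g S

lemma hasDerivAt_update (x : Fin 4 → ℝ) (i : Fin 4) (t : ℝ) :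
    HasDerivAt (fun s => Function.update x i s) (Pi.single i 1) t := by
  have h : (fun s : ℝ => Function.update x i s) = fun s => x + (s - x i) • (Pi.single i 1 : Fin 4 → ℝ) := by
    funext s; funext j
    rcases eq_or_ne j i with rfl | hj
    · simp
    · simp [Function.update_of_ne hj, Pi.single_eq_of_ne hj]
  rw [h]
  simpa using (((hasDerivAt_id t).sub_const (x i)).smul_const (Pi.single i (1:ℝ))).const_add x

lemma hasDerivAt_pd (hg : DifferentiableAt ℝ g x) (i : Fin 4) :
    HasDerivAt (fun t => g (Function.update x i t)) (fderiv ℝ g x (Pi.single i 1)) (x i) := by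
  have h2 : HasFDerivAt g (fderiv ℝ g x) (Function.update x i (x i)) := by
    rw [Function.update_eq_self]; exact hg.hasFDerivAt
  exact h2.comp_hasDerivAt _ (hasDerivAt_update x i (x i))

lemma pd_eq_fderiv (hg : DifferentiableAt ℝ g x) (i : Fin 4) :
    pd i g x = fderiv ℝ g x (Pi.single i 1) := (hasDerivAt_pd hg i).deriv

lemma pd_hasDerivAt (hg : DifferentiableAt ℝ g x) (i : Fin 4) :
    HasDerivAt (fun t => g (Function.update x i t)) (pd i g x) (x i) := by
  rw [pd_eq_fderiv hg]; exact hasDerivAt_pd hg i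

lemma pd_mul (hg : DifferentiableAt ℝ g x) (hh : DifferentiableAt ℝ h x) (i : Fin 4) :
    pd i (fun y => g y * h y) x = pd i g x * h x + g x * pd i h x := by
  have := ((pd_hasDerivAt hg i).fun_mul (pd_hasDerivAt hh i)).deriv
  simpa [pd, Function.update_eq_self] using this

lemma pd_add (hg : DifferentiableAt ℝ g x) (hh : DifferentiableAt ℝ h x) (i : Fin 4) :
    pd i (fun y => g y + h y) x = pd i g x + pd i h x := by
  have := ((pd_hasDerivAt hg i).fun_add (pd_hasDerivAt hh i)).deriv
  simpa [pd] using this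

lemma pd_sub (hg : DifferentiableAt ℝ g x) (hh : DifferentiableAt ℝ h x) (i : Fin 4) :
    pd i (fun y => g y - h y) x = pd i g x - pd i h x := by
  have := ((pd_hasDerivAt hg i).fun_sub (pd_hasDerivAt hh i)).deriv
  simpa [pd] using this

lemma pd_comp_self (φ : ℝ → ℝ) : pd i (fun y => φ (y i)) x = deriv φ (x i) := by
  simp [pd]

lemma pd_comp_ne (φ : ℝ → ℝ) (hij : j ≠ i) : pd i (fun y => φ (y j)) x = 0 := by
  simp [pd, Function.update_of_ne hij]

lemma pd_coord_self : pd i (fun y => y i) x = 1 := by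
  simp [pd]

lemma pd_coord_ne (hij : j ≠ i) : pd i (fun y => y j) x = 0 := by
  simp [pd, Function.update_of_ne hij]

lemma pd_const (c : ℝ) : pd i (fun _ => c) x = 0 := by simp [pd]

lemma pd_congr (hgh : g =ᶠ[nhds x] h) (i : Fin 4) : pd i g x = pd i h x := by
  have hc : Filter.Tendsto (fun t => Function.update x i t) (nhds (x i)) (nhds x) := by
    have := (hasDerivAt_update x i (x i)).continuousAt.tendsto
    simpa [Function.update_eq_self] using this
  exact Filter.EventuallyEq.deriv_eq (hc.eventually hgh)


lemma Sm.diffAt (hg : Sm g) (hx : x ∈ S) : DifferentiableAt ℝ g x :=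
  (hg.differentiableOn (by simp)).differentiableAt (isOpen_S.mem_nhds hx)

lemma Sm.cAt (hg : Sm g) (hx : x ∈ S) : ContDiffAt ℝ (⊤ : ℕ∞) g x :=
  ContDiffOn.contDiffAt hg (isOpen_S.mem_nhds hx)

lemma sm_coord (j : Fin 4) : Sm (fun y => y j) := (contDiff_apply ℝ ℝ j).contDiffOn

lemma sm_const (c : ℝ) : Sm (fun _ => c) := contDiffOn_const

lemma Sm.add (hg : Sm g) (hh : Sm h) : Sm (fun y => g y + h y) := ContDiffOn.add hg hh
lemma Sm.sub (hg : Sm g) (hh : Sm h) : Sm (fun y => g y - h y) := ContDiffOn.sub hg hh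
lemma Sm.mul (hg : Sm g) (hh : Sm h) : Sm (fun y => g y * h y) := ContDiffOn.mul hg hh

lemma sm_comp1 (hφ : ContDiff ℝ (⊤ : ℕ∞) φ) (j : Fin 4) : Sm (fun y => φ (y j)) :=
  hφ.comp_contDiffOn (sm_coord j)

lemma Sm.pd (hg : Sm g) (i : Fin 4) : Sm (pd i g) := by
  have hD : Sm (fun y => fderiv ℝ g y (Pi.single i 1)) :=
    (hg.fderiv_of_isOpen isOpen_S (by simp)).clm_apply contDiffOn_const
  exact hD.congr (fun y hy => pd_eq_fderiv (hg.diffAt hy) i)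

lemma pd_comm (hg : Sm g) (hx : x ∈ S) (i j : Fin 4) :
    pd i (pd j g) x = pd j (pd i g) x := by
  have hfd : ∀ k : Fin 4, pd k g =ᶠ[nhds x] fun y => fderiv ℝ g y (Pi.single k 1) := by
    intro k
    filter_upwards [isOpen_S.mem_nhds hx] with y hy
    exact pd_eq_fderiv (hg.diffAt hy) k
  have hdf : DifferentiableAt ℝ (fderiv ℝ g) x :=
    ((hg.cAt hx).fderiv_right (m := 1) (WithTop.coe_le_coe.mpr le_top)).differentiableAt one_ne_zero
  have key : ∀ k l : Fin 4, pd k (pd l g) x =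
      fderiv ℝ (fderiv ℝ g) x (Pi.single k 1) (Pi.single l 1) := by
    intro k l
    rw [pd_congr (hfd l) k, pd_eq_fderiv (hdf.clm_apply (differentiableAt_const _)) k,
      fderiv_clm_apply hdf (differentiableAt_const _)]
    simp
  rw [key i j, key j i]
  exact ((hg.cAt hx).isSymmSndFDerivAt (by rw [minSmoothness_of_isRCLikeNormedField]; exact WithTop.coe_le_coe.mpr le_top)) _ _


lemma contDiff_derivF (hF : ContDiff ℝ (⊤ : ℕ∞) F) : ContDiff ℝ (⊤ : ℕ∞) (deriv F) := by
  have h : ContDiff ℝ (((⊤ : ℕ∞) : WithTop ℕ∞) + 1) F := hF.of_le (le_of_eq rfl)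
  exact (contDiff_succ_iff_deriv.mp h).2.2

lemma dAt_coord (j : Fin 4) : DifferentiableAt ℝ (fun y : Fin 4 → ℝ => y j) x :=
  (ContinuousLinearMap.proj j : (Fin 4 → ℝ) →L[ℝ] ℝ).differentiableAt

lemma dAt_comp1 (hφ : DifferentiableAt ℝ φ (x j)) :
    DifferentiableAt ℝ (fun y => φ (y j)) x := hφ.comp x (dAt_coord j)

lemma dAt_mu_r (μ : ℝ) (hx : x ∈ S) : DifferentiableAt ℝ (fun y : Fin 4 → ℝ => μ / y 0) x :=
  dAt_comp1 (((differentiableAt_const μ).div differentiableAt_id hx))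

lemma pd0_mu_r (μ : ℝ) (hx : x ∈ S) :
    pd 0 (fun y : Fin 4 → ℝ => μ / y 0) x = -(μ / (x 0)^2) := by
  rw [pd_comp_self (fun t => μ / t)]
  have h : HasDerivAt (fun t : ℝ => μ / t) (μ * (-((x 0)^2)⁻¹)) (x 0) := by
    simpa [div_eq_mul_inv] using (hasDerivAt_inv hx).const_mul μ
  rw [h.deriv]; field_simp

lemma sm_mu_r (μ : ℝ) : Sm (fun y : Fin 4 → ℝ => μ / y 0) :=
  ContDiffOn.div (sm_const μ) (sm_coord 0) (fun _ hx => hx)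

lemma sm_Lfun (hF : ContDiff ℝ (⊤ : ℕ∞) F) : Sm (Lfun F) := by
  unfold Lfun
  exact ((sm_const (1/2)).mul ((sm_coord 3).pow 2)).add (sm_comp1 hF 1)

lemma sm_XL (hF : ContDiff ℝ (⊤ : ℕ∞) F) (hg : Sm g) : Sm (XL F g) := by
  unfold XL
  exact ((sm_coord 3).mul (hg.pd 1)).sub ((sm_comp1 (contDiff_derivF hF) 1).mul (hg.pd 3))

lemma sm_U (hF : ContDiff ℝ (⊤ : ℕ∞) F) (hg : Sm g) : Sm (Uop μ F g) := by
  unfold Uop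
  exact ((sm_coord 2).mul hg).add ((sm_mu_r μ).mul (sm_XL hF hg))

lemma sm_XH (hF : ContDiff ℝ (⊤ : ℕ∞) F) (hg : Sm g) : Sm (XHop F g) := by
  unfold XHop
  refine (((sm_coord 2).mul (hg.pd 0)).add
    ((ContDiffOn.div ((sm_const 2).mul (sm_Lfun hF)) ((sm_coord 0).pow 3)
      (fun y hy => pow_ne_zero 3 hy)).mul (hg.pd 2))).add
    ((ContDiffOn.div (sm_const 1) ((sm_coord 0).pow 2)
      (fun y hy => pow_ne_zero 2 hy)).mul (sm_XL hF hg))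

lemma XL_mul (hg : DifferentiableAt ℝ g x) (hh : DifferentiableAt ℝ h x) :
    XL F (fun y => g y * h y) x = XL F g x * h x + g x * XL F h x := by
  unfold XL; rw [pd_mul hg hh 1, pd_mul hg hh 3]; ring

lemma XL_add (hg : DifferentiableAt ℝ g x) (hh : DifferentiableAt ℝ h x) :
    XL F (fun y => g y + h y) x = XL F g x + XL F h x := by
  unfold XL; rw [pd_add hg hh 1, pd_add hg hh 3]; ring

lemma XL_comp0 (φ : ℝ → ℝ) : XL F (fun y => φ (y 0)) x = 0 := by
  unfold XL
  rw [pd_comp_ne φ (show (0:Fin 4) ≠ 1 by decide), pd_comp_ne φ (show (0:Fin 4) ≠ 3 by decide)]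
  ring

lemma XL_coord2 : XL F (fun y => y 2) x = 0 := by
  unfold XL
  rw [pd_coord_ne (show (2:Fin 4) ≠ 1 by decide), pd_coord_ne (show (2:Fin 4) ≠ 3 by decide)]
  ring

lemma XL_congr (hgh : g =ᶠ[nhds x] h) : XL F g x = XL F h x := by
  unfold XL; rw [pd_congr hgh 1, pd_congr hgh 3]

lemma XL_Lfun (hF : ContDiff ℝ (⊤ : ℕ∞) F) : XL F (Lfun F) x = 0 := by
  unfold XL Lfun
  have d1 : DifferentiableAt ℝ (fun y : Fin 4 → ℝ => (1/2) * (y 3)^2) x :=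
    (differentiableAt_const _).mul ((dAt_coord 3).pow 2)
  have d2 : DifferentiableAt ℝ (fun y : Fin 4 → ℝ => F (y 1)) x :=
    dAt_comp1 (hF.differentiable (by simp) _)
  rw [pd_add d1 d2 1, pd_add d1 d2 3,
    pd_comp_ne (fun t => (1/2) * t^2) (show (3:Fin 4) ≠ 1 by decide),
    pd_comp_ne F (show (1:Fin 4) ≠ 3 by decide),
    pd_comp_self F, pd_comp_self (fun t => (1/2) * t^2)]
  have : deriv (fun t : ℝ => (1/2) * t^2) (x 3) = x 3 := by
    rw [deriv_const_mul _ (differentiableAt_pow 2), deriv_pow_field 2]; ring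
  rw [this]; ring


lemma XL_sub (hg : DifferentiableAt ℝ g x) (hh : DifferentiableAt ℝ h x) :
    XL F (fun y => g y - h y) x = XL F g x - XL F h x := by
  unfold XL; rw [pd_sub hg hh 1, pd_sub hg hh 3]; ring

lemma XL_const (c : ℝ) : XL F (fun _ => c) x = 0 := by
  unfold XL; rw [pd_const, pd_const]; ring

lemma pd_XL_comm (hF : ContDiff ℝ (⊤ : ℕ∞) F) (hg : Sm g) (hx : x ∈ S) (i : Fin 4)
    (h1 : i ≠ 1) (h3 : i ≠ 3) :
    pd i (XL F g) x = XL F (pd i g) x := by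
  have d3 : DifferentiableAt ℝ (fun y : Fin 4 → ℝ => y 3) x := dAt_coord 3
  have dp1 := (hg.pd 1).diffAt hx
  have dp3 := (hg.pd 3).diffAt hx
  have dF' : DifferentiableAt ℝ (fun y : Fin 4 → ℝ => deriv F (y 1)) x :=
    dAt_comp1 ((contDiff_derivF hF).differentiable (by simp) _)
  show pd i (fun y => y 3 * pd 1 g y - deriv F (y 1) * pd 3 g y) x = _
  rw [pd_sub (d3.fun_mul dp1) (dF'.fun_mul dp3) i, pd_mul d3 dp1 i, pd_mul dF' dp3 i,
    pd_coord_ne (Ne.symm h3), pd_comp_ne (deriv F) (Ne.symm h1),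
    pd_comm hg hx i 1, pd_comm hg hx i 3]
  unfold XL; ring

lemma pd0_U (hF : ContDiff ℝ (⊤ : ℕ∞) F) (hg : Sm g) (hx : x ∈ S) :
    pd 0 (Uop μ F g) x
      = x 2 * pd 0 g x - (μ / (x 0)^2) * XL F g x + (μ / x 0) * XL F (pd 0 g) x := by
  have dg := hg.diffAt hx
  have dXL := (sm_XL hF hg).diffAt hx
  have d1 : DifferentiableAt ℝ (fun y : Fin 4 → ℝ => y 2 * g y) x := (dAt_coord 2).mul dg
  have d2 : DifferentiableAt ℝ (fun y : Fin 4 → ℝ => (μ / y 0) * XL F g y) x :=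
    (dAt_mu_r μ hx).mul dXL
  show pd 0 (fun y => y 2 * g y + (μ / y 0) * XL F g y) x = _
  rw [pd_add d1 d2 0, pd_mul (dAt_coord 2) dg 0, pd_mul (dAt_mu_r μ hx) dXL 0,
    pd_coord_ne (show (2:Fin 4) ≠ 0 by decide), pd0_mu_r μ hx,
    pd_XL_comm hF hg hx 0 (by decide) (by decide)]
  ring

lemma pd2_U (hF : ContDiff ℝ (⊤ : ℕ∞) F) (hg : Sm g) (hx : x ∈ S) :
    pd 2 (Uop μ F g) x = g x + x 2 * pd 2 g x + (μ / x 0) * XL F (pd 2 g) x := by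
  have dg := hg.diffAt hx
  have dXL := (sm_XL hF hg).diffAt hx
  have d1 : DifferentiableAt ℝ (fun y : Fin 4 → ℝ => y 2 * g y) x := (dAt_coord 2).mul dg
  have d2 : DifferentiableAt ℝ (fun y : Fin 4 → ℝ => (μ / y 0) * XL F g y) x :=
    (dAt_mu_r μ hx).mul dXL
  show pd 2 (fun y => y 2 * g y + (μ / y 0) * XL F g y) x = _
  rw [pd_add d1 d2 2, pd_mul (dAt_coord 2) dg 2, pd_mul (dAt_mu_r μ hx) dXL 2,
    pd_coord_self, pd_comp_ne (fun t => μ / t) (show (0:Fin 4) ≠ 2 by decide),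
    pd_XL_comm hF hg hx 2 (by decide) (by decide)]
  ring

lemma XL_U (hF : ContDiff ℝ (⊤ : ℕ∞) F) (hg : Sm g) (hx : x ∈ S) :
    XL F (Uop μ F g) x = x 2 * XL F g x + (μ / x 0) * XL F (XL F g) x := by
  have dg := hg.diffAt hx
  have dXL := (sm_XL hF hg).diffAt hx
  have d1 : DifferentiableAt ℝ (fun y : Fin 4 → ℝ => y 2 * g y) x := (dAt_coord 2).mul dg
  have d2 : DifferentiableAt ℝ (fun y : Fin 4 → ℝ => (μ / y 0) * XL F g y) x :=
    (dAt_mu_r μ hx).mul dXL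
  show XL F (fun y => y 2 * g y + (μ / y 0) * XL F g y) x = _
  rw [XL_add d1 d2, XL_mul (dAt_coord 2) dg, XL_mul (dAt_mu_r μ hx) dXL,
    XL_coord2, XL_comp0 (fun t => μ / t)]
  ring

lemma sm_c1 (hF : ContDiff ℝ (⊤ : ℕ∞) F) : Sm (fun y : Fin 4 → ℝ => 2 * Lfun F y / (y 0)^3) :=
  ContDiffOn.div ((sm_const 2).mul (sm_Lfun hF)) ((sm_coord 0).pow 3)
    (fun _ hy => pow_ne_zero 3 hy)

lemma XL_c1 (hF : ContDiff ℝ (⊤ : ℕ∞) F) (hx : x ∈ S) :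
    XL F (fun y : Fin 4 → ℝ => 2 * Lfun F y / (y 0)^3) x = 0 := by
  have e : (fun y : Fin 4 → ℝ => 2 * Lfun F y / (y 0)^3)
      = fun y => (2 * Lfun F y) * ((y 0)^3)⁻¹ := by
    funext y; rw [div_eq_mul_inv]
  have dL : DifferentiableAt ℝ (Lfun F) x := (sm_Lfun hF).diffAt hx
  have da : DifferentiableAt ℝ (fun y : Fin 4 → ℝ => 2 * Lfun F y) x :=
    (differentiableAt_const 2).mul dL
  have db : DifferentiableAt ℝ (fun y : Fin 4 → ℝ => ((y 0)^3)⁻¹) x :=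
    dAt_comp1 ((differentiableAt_pow 3).inv (pow_ne_zero 3 hx))
  rw [e, XL_mul da db, XL_mul (differentiableAt_const 2) dL, XL_const,
    XL_Lfun hF, XL_comp0 (fun t => (t^3)⁻¹)]
  ring

lemma XL_c2 (μ : ℝ) (hx : x ∈ S) :
    XL F (fun y : Fin 4 → ℝ => μ * y 2 / (y 0)^2) x = 0 := by
  have e : (fun y : Fin 4 → ℝ => μ * y 2 / (y 0)^2)
      = fun y => (μ * y 2) * ((y 0)^2)⁻¹ := by
    funext y; rw [div_eq_mul_inv]
  have da : DifferentiableAt ℝ (fun y : Fin 4 → ℝ => μ * y 2) x :=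
    (differentiableAt_const μ).mul (dAt_coord 2)
  have db : DifferentiableAt ℝ (fun y : Fin 4 → ℝ => ((y 0)^2)⁻¹) x :=
    dAt_comp1 ((differentiableAt_pow 2).inv (pow_ne_zero 2 hx))
  rw [e, XL_mul da db, XL_mul (differentiableAt_const μ) (dAt_coord 2), XL_const,
    XL_coord2, XL_comp0 (fun t => (t^2)⁻¹)]
  ring

lemma XL_XH (hF : ContDiff ℝ (⊤ : ℕ∞) F) (hg : Sm g) (hx : x ∈ S) :
    XL F (XHop F g) x = x 2 * XL F (pd 0 g) x
      + (2 * Lfun F x / (x 0)^3) * XL F (pd 2 g) x + (1 / (x 0)^2) * XL F (XL F g) x := by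
  have dp0 := (hg.pd 0).diffAt hx
  have dp2 := (hg.pd 2).diffAt hx
  have dXL := (sm_XL hF hg).diffAt hx
  have dc1 := (sm_c1 hF).diffAt hx
  have dc2 : DifferentiableAt ℝ (fun y : Fin 4 → ℝ => 1 / (y 0)^2) x :=
    dAt_comp1 ((differentiableAt_const 1).div (differentiableAt_pow 2) (pow_ne_zero 2 hx))
  have d1 : DifferentiableAt ℝ (fun y : Fin 4 → ℝ => y 2 * pd 0 g y) x := (dAt_coord 2).mul dp0
  have d2 : DifferentiableAt ℝ (fun y : Fin 4 → ℝ => (2 * Lfun F y / (y 0)^3) * pd 2 g y) x :=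
    dc1.mul dp2
  have d3 : DifferentiableAt ℝ (fun y : Fin 4 → ℝ => (1 / (y 0)^2) * XL F g y) x := dc2.mul dXL
  show XL F (fun y => y 2 * pd 0 g y + (2 * Lfun F y / (y 0)^3) * pd 2 g y
    + (1 / (y 0)^2) * XL F g y) x = _
  rw [XL_add (d1.fun_add d2) d3, XL_add d1 d2, XL_mul (dAt_coord 2) dp0, XL_mul dc1 dp2,
    XL_mul dc2 dXL, XL_coord2, XL_c1 hF hx, XL_comp0 (fun t => 1 / t^2)]
  ring

lemma keyC (hF : ContDiff ℝ (⊤ : ℕ∞) F) (hg : Sm g) (hx : x ∈ S) :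
    XHop F (Uop μ F g) x - Uop μ F (XHop F g) x
      = 2 * Lfun F x / (x 0)^3 * g x - μ * x 2 / (x 0)^2 * XL F g x := by
  have hx0 : x 0 ≠ 0 := hx
  have e1 : XHop F (Uop μ F g) x = x 2 * pd 0 (Uop μ F g) x
      + (2 * Lfun F x / (x 0)^3) * pd 2 (Uop μ F g) x
      + (1 / (x 0)^2) * XL F (Uop μ F g) x := rfl
  have e2 : Uop μ F (XHop F g) x = x 2 * XHop F g x + (μ / x 0) * XL F (XHop F g) x := rfl
  have e3 : XHop F g x = x 2 * pd 0 g x + (2 * Lfun F x / (x 0)^3) * pd 2 g x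
      + (1 / (x 0)^2) * XL F g x := rfl
  rw [e1, e2, e3, pd0_U hF hg hx, pd2_U hF hg hx, XL_U hF hg hx, XL_XH hF hg hx]
  field_simp
  ring


lemma Uop_congr (hgh : g =ᶠ[nhds x] h) : Uop μ F g x = Uop μ F h x := by
  show x 2 * g x + (μ / x 0) * XL F g x = x 2 * h x + (μ / x 0) * XL F h x
  rw [XL_congr hgh, hgh.eq_of_nhds]

lemma U_sub (hg : DifferentiableAt ℝ g x) (hh : DifferentiableAt ℝ h x) :
    Uop μ F (fun y => g y - h y) x = Uop μ F g x - Uop μ F h x := by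
  unfold Uop
  rw [XL_sub hg hh]; ring

lemma sm_c2 (μ : ℝ) : Sm (fun y : Fin 4 → ℝ => μ * y 2 / (y 0)^2) :=
  ContDiffOn.div ((sm_const μ).mul (sm_coord 2)) ((sm_coord 0).pow 2)
    (fun _ hy => pow_ne_zero 2 hy)

lemma key2 {f : (Fin 4 → ℝ) → ℝ} (hF : ContDiff ℝ (⊤ : ℕ∞) F) (hsf : Sm f) (hx : x ∈ S) :
    Uop μ F (fun y => 2 * Lfun F y / (y 0)^3 * f y - μ * y 2 / (y 0)^2 * XL F f y) x
      = 2 * Lfun F x / (x 0)^3 * Uop μ F f x - μ * x 2 / (x 0)^2 * XL F (Uop μ F f) x := by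
  have hx0 : x 0 ≠ 0 := hx
  have dc1 := (sm_c1 hF).diffAt hx
  have dc2 : DifferentiableAt ℝ (fun y : Fin 4 → ℝ => μ * y 2 / (y 0)^2) x := Sm.diffAt (sm_c2 μ) hx
  have df := hsf.diffAt hx
  have dXLf := (sm_XL hF hsf).diffAt hx
  have dA : DifferentiableAt ℝ (fun y : Fin 4 → ℝ => 2 * Lfun F y / (y 0)^3 * f y) x :=
    dc1.mul df
  have dB : DifferentiableAt ℝ (fun y : Fin 4 → ℝ => μ * y 2 / (y 0)^2 * XL F f y) x :=
    dc2.mul dXLf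
  rw [XL_U hF hsf hx]
  have eU : Uop μ F f x = x 2 * f x + (μ / x 0) * XL F f x := rfl
  have eL : Uop μ F (fun y => 2 * Lfun F y / (y 0)^3 * f y - μ * y 2 / (y 0)^2 * XL F f y) x
      = x 2 * (2 * Lfun F x / (x 0)^3 * f x - μ * x 2 / (x 0)^2 * XL F f x)
        + (μ / x 0) * XL F (fun y => 2 * Lfun F y / (y 0)^3 * f y
            - μ * y 2 / (y 0)^2 * XL F f y) x := rfl
  rw [eL, eU, XL_sub dA dB, XL_mul dc1 df, XL_mul dc2 dXLf, XL_c1 hF hx, XL_c2 μ hx]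
  field_simp
  ring

end DC

/-- The double commutator `[[X_H, U], U] = X_H U² − 2 U X_H U + U² X_H` vanishes. -/
theorem double_commutator_XH_U (μ : ℝ) (F : ℝ → ℝ) (hF : ContDiff ℝ (⊤ : ℕ∞) F)
    (f : (Fin 4 → ℝ) → ℝ) (hf : ContDiff ℝ (⊤ : ℕ∞) f)
    (x : Fin 4 → ℝ) (hr : 0 < x 0) :
    XHop F (Uop μ F (Uop μ F f)) x - 2 * Uop μ F (XHop F (Uop μ F f)) x
      + Uop μ F (Uop μ F (XHop F f)) x = 0 := by
  have hx : x ∈ DC.S := hr.ne'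
  have hsf : DC.Sm f := hf.contDiffOn
  have hsUf : DC.Sm (Uop μ F f) := DC.sm_U hF hsf
  have kA := DC.keyC (μ := μ) hF hsUf hx
  have hEv : (fun y => XHop F (Uop μ F f) y - Uop μ F (XHop F f) y) =ᶠ[nhds x]
      (fun y => 2 * Lfun F y / (y 0)^3 * f y - μ * y 2 / (y 0)^2 * XL F f y) :=
    Filter.eventuallyEq_of_mem (DC.isOpen_S.mem_nhds hx)
      (fun y hy => DC.keyC (μ := μ) hF hsf hy)
  have hUC := DC.Uop_congr (μ := μ) (F := F) hEv
  have hUsub : Uop μ F (fun y => XHop F (Uop μ F f) y - Uop μ F (XHop F f) y) x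
      = Uop μ F (XHop F (Uop μ F f)) x - Uop μ F (Uop μ F (XHop F f)) x :=
    DC.U_sub ((DC.sm_XH hF hsUf).diffAt hx) ((DC.sm_U hF (DC.sm_XH hF hsf)).diffAt hx)
  have k2 := DC.key2 (μ := μ) hF hsf hx
  linarith [kA, hUC, hUsub, k2]
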